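/- Let H be an L² space over a σ-finite measure space and let A : H → H be a bounded linear operator such that ⟨φ, Aψ⟩ = 0 whenever φ and ψ have disjoint supports (i.e. φ·ψ = 0 a.e.). Then A is a multiplication operator: there exists v ∈ L^∞ with ‖v‖_∞ ≤ ‖A‖ such that Aφ = v·φ for all φ ∈ H. -/

import Mathlib

open MeasureTheory Set
open scoped ENNReal

section Aux

variable {X : Type*} [MeasurableSpace X] {μ : Measure X}

/-- Multiplication of an `L²` function by the indicator of a measurable set,
as an element of `L²`. -/
noncomputable def mulInd {S : Set X} (hS : MeasurableSet S) (ψ : Lp ℝ 2 μ) : Lp ℝ 2 μ :=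
  ((Lp.memLp ψ).indicator hS).toLp (S.indicator ψ)

lemma mulInd_coeFn {S : Set X} (hS : MeasurableSet S) (ψ : Lp ℝ 2 μ) :
    (mulInd hS ψ : X → ℝ) =ᵐ[μ] S.indicator ψ := MemLp.coeFn_toLp _

lemma vanish (A : Lp ℝ 2 μ →L[ℝ] Lp ℝ 2 μ)
    (hdisj : ∀ φ ψ : Lp ℝ 2 μ, (fun x => (φ : X → ℝ) x * (ψ : X → ℝ) x) =ᵐ[μ] 0 →
      @inner ℝ _ _ φ (A ψ) = 0)
    {S : Set X} (hS : MeasurableSet S) (ψ : Lp ℝ 2 μ)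
    (hψ : ∀ᵐ x ∂μ, x ∉ S → (ψ : X → ℝ) x = 0) :
    ∀ᵐ x ∂μ, x ∉ S → (A ψ : X → ℝ) x = 0 := by
  set φ := mulInd hS.compl (A ψ) with hφdef
  have hφ : (φ : X → ℝ) =ᵐ[μ] Sᶜ.indicator (A ψ) := mulInd_coeFn _ _
  have h0 : (fun x => (φ : X → ℝ) x * (ψ : X → ℝ) x) =ᵐ[μ] 0 := by
    filter_upwards [hφ, hψ] with x hx hx2
    by_cases hxS : x ∈ S
    · have : x ∉ Sᶜ := by simpa using hxS
      simp [hx, Set.indicator_of_notMem this]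
    · simp [hx2 hxS]
  have hinner := hdisj φ ψ h0
  have h2 : @inner ℝ _ _ φ (A ψ) = @inner ℝ _ _ φ φ := by
    rw [L2.inner_def, L2.inner_def]
    apply integral_congr_ae
    filter_upwards [hφ] with x hx
    by_cases hxS : x ∈ Sᶜ
    · rw [hx, Set.indicator_of_mem hxS]
    · simp [hx, Set.indicator_of_notMem hxS]
  have hz : φ = 0 := inner_self_eq_zero.1 (h2 ▸ hinner)
  have hz2 : (φ : X → ℝ) =ᵐ[μ] 0 := hz ▸ Lp.coeFn_zero ℝ 2 μ
  filter_upwards [hφ, hz2] with x hx hx0 hxS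
  have : x ∈ Sᶜ := hxS
  rw [← Set.indicator_of_mem this ((A ψ : X → ℝ)), ← hx, hx0]
  rfl

lemma commute_ind (A : Lp ℝ 2 μ →L[ℝ] Lp ℝ 2 μ)
    (hdisj : ∀ φ ψ : Lp ℝ 2 μ, (fun x => (φ : X → ℝ) x * (ψ : X → ℝ) x) =ᵐ[μ] 0 →
      @inner ℝ _ _ φ (A ψ) = 0)
    {S : Set X} (hS : MeasurableSet S) (ψ : Lp ℝ 2 μ) :
    (A (mulInd hS ψ) : X → ℝ) =ᵐ[μ] S.indicator (A ψ) := by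
  have hsplit : mulInd hS ψ + mulInd hS.compl ψ = ψ := by
    apply Lp.ext
    filter_upwards [Lp.coeFn_add (mulInd hS ψ) (mulInd hS.compl ψ), mulInd_coeFn hS ψ,
      mulInd_coeFn hS.compl ψ] with x h1 h2 h3
    rw [h1]
    simp only [Pi.add_apply, h2, h3]
    exact congrFun (Set.indicator_self_add_compl S (ψ : X → ℝ)) x
  have h1 : ∀ᵐ x ∂μ, x ∉ S → (A (mulInd hS ψ) : X → ℝ) x = 0 := by
    apply vanish A hdisj hS
    filter_upwards [mulInd_coeFn hS ψ] with x hx hxS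
    rw [hx, Set.indicator_of_notMem hxS]
  have h2 : ∀ᵐ x ∂μ, x ∈ S → (A (mulInd hS.compl ψ) : X → ℝ) x = 0 := by
    have := vanish A hdisj hS.compl (mulInd hS.compl ψ) ?_
    · filter_upwards [this] with x hx hxS
      exact hx (by simpa using hxS)
    · filter_upwards [mulInd_coeFn hS.compl ψ] with x hx hxS
      rw [hx, Set.indicator_of_notMem hxS]
  have hAψ : (A ψ : X → ℝ) =ᵐ[μ]
      fun x => (A (mulInd hS ψ) : X → ℝ) x + (A (mulInd hS.compl ψ) : X → ℝ) x := by
    conv_lhs => rw [← hsplit]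
    rw [map_add]
    exact Lp.coeFn_add _ _
  filter_upwards [h1, h2, hAψ] with x hx1 hx2 hx3
  by_cases hxS : x ∈ S
  · rw [Set.indicator_of_mem hxS, hx3, hx2 hxS, add_zero]
  · rw [Set.indicator_of_notMem hxS, hx1 hxS]

lemma apply_ind_subset (A : Lp ℝ 2 μ →L[ℝ] Lp ℝ 2 μ)
    (hdisj : ∀ φ ψ : Lp ℝ 2 μ, (fun x => (φ : X → ℝ) x * (ψ : X → ℝ) x) =ᵐ[μ] 0 →
      @inner ℝ _ _ φ (A ψ) = 0)
    {T D : Set X} (hT : MeasurableSet T) (hD : MeasurableSet D) (hTD : T ⊆ D)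
    (hμT : μ T ≠ ∞) (hμD : μ D ≠ ∞) :
    (A (indicatorConstLp 2 hT hμT (1:ℝ)) : X → ℝ)
      =ᵐ[μ] T.indicator (A (indicatorConstLp 2 hD hμD (1:ℝ))) := by
  have key : indicatorConstLp 2 hT hμT (1:ℝ) = mulInd hT (indicatorConstLp 2 hD hμD (1:ℝ)) := by
    apply Lp.ext
    filter_upwards [indicatorConstLp_coeFn (p := 2) (hs := hT) (hμs := hμT) (c := (1:ℝ)),
      mulInd_coeFn hT (indicatorConstLp 2 hD hμD (1:ℝ)),
      indicatorConstLp_coeFn (p := 2) (hs := hD) (hμs := hμD) (c := (1:ℝ))] with x h1 h2 h3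
    rw [h1, h2]
    by_cases hxT : x ∈ T
    · rw [Set.indicator_of_mem hxT, Set.indicator_of_mem hxT, h3,
        Set.indicator_of_mem (hTD hxT)]
    · rw [Set.indicator_of_notMem hxT, Set.indicator_of_notMem hxT]
  rw [key]
  exact commute_ind A hdisj hT _

lemma ae_bound (A : Lp ℝ 2 μ →L[ℝ] Lp ℝ 2 μ)
    (hdisj : ∀ φ ψ : Lp ℝ 2 μ, (fun x => (φ : X → ℝ) x * (ψ : X → ℝ) x) =ᵐ[μ] 0 →
      @inner ℝ _ _ φ (A ψ) = 0)
    {D : Set X} (hD : MeasurableSet D) (hμD : μ D ≠ ∞)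
    {g : X → ℝ} (hgm : Measurable g)
    (hg : (A (indicatorConstLp 2 hD hμD (1:ℝ)) : X → ℝ) =ᵐ[μ] g) :
    ∀ᵐ x ∂μ, x ∈ D → |g x| ≤ ‖A‖ := by
  have key : ∀ n : ℕ, μ (D ∩ {x | ‖A‖^2 + 1/((n:ℝ)+1) ≤ (g x)^2}) = 0 := by
    intro n
    set c : ℝ := ‖A‖^2 + 1/((n:ℝ)+1) with hc
    have hcpos : 0 < 1/((n:ℝ)+1) := by positivity
    set T := D ∩ {x | c ≤ (g x)^2} with hTdef
    have hT : MeasurableSet T :=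
      hD.inter (measurableSet_le measurable_const ((hgm.pow_const 2)))
    have hTD : T ⊆ D := inter_subset_left
    have hμT : μ T ≠ ∞ := ((measure_mono hTD).trans_lt (lt_top_iff_ne_top.2 hμD)).ne
    set χT := indicatorConstLp 2 hT hμT (1:ℝ) with hχT
    have hAT : (A χT : X → ℝ) =ᵐ[μ] T.indicator g := by
      refine (apply_ind_subset A hdisj hT hD hTD hμT hμD).trans ?_
      filter_upwards [hg] with x hx
      by_cases hxT : x ∈ T
      · rw [Set.indicator_of_mem hxT, Set.indicator_of_mem hxT, hx]
      · rw [Set.indicator_of_notMem hxT, Set.indicator_of_notMem hxT]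
    have hnorm : ‖A χT‖ ^ 2 = ∫ x, (T.indicator g x)^2 ∂μ := by
      rw [← real_inner_self_eq_norm_sq, L2.inner_def]
      apply integral_congr_ae
      filter_upwards [hAT] with x hx
      rw [real_inner_self_eq_norm_sq, hx, Real.norm_eq_abs, sq_abs]
    have hint : Integrable (fun x => (T.indicator g x)^2) μ := by
      refine (L2.integrable_inner (𝕜 := ℝ) (A χT) (A χT)).congr ?_
      filter_upwards [hAT] with x hx
      rw [real_inner_self_eq_norm_sq, hx, Real.norm_eq_abs, sq_abs]
    have hintc : Integrable (T.indicator fun _ => c) μ := by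
      rw [integrable_indicator_iff hT]
      exact integrableOn_const hμT
    have hlow : c * (μ T).toReal ≤ ∫ x, (T.indicator g x)^2 ∂μ := by
      have h1 : ∫ x, T.indicator (fun _ => c) x ∂μ = (μ T).toReal • c :=
        integral_indicator_const c hT
      have h2 : ∫ x, T.indicator (fun _ => c) x ∂μ ≤ ∫ x, (T.indicator g x)^2 ∂μ := by
        refine integral_mono hintc hint ?_
        intro x
        dsimp only
        by_cases hxT : x ∈ T
        · rw [Set.indicator_of_mem hxT, Set.indicator_of_mem hxT]
          exact hxT.2
        · rw [Set.indicator_of_notMem hxT, Set.indicator_of_notMem hxT]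
          positivity
      rw [h1, smul_eq_mul] at h2
      linarith
    have hχnorm : ‖χT‖^2 = (μ T).toReal := by
      rw [hχT, norm_indicatorConstLp (by norm_num) (by norm_num)]
      rw [norm_one, one_mul]
      rw [← Real.rpow_natCast (μ.real T ^ (1 / (2:ℝ≥0∞).toReal)) 2,
        ← Real.rpow_mul measureReal_nonneg]
      norm_num [Measure.real]
    have hup : ‖A χT‖^2 ≤ ‖A‖^2 * (μ T).toReal := by
      have h1 : ‖A χT‖ ≤ ‖A‖ * ‖χT‖ := A.le_opNorm χT
      nlinarith [norm_nonneg (A χT), norm_nonneg χT, norm_nonneg A]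
    have hm : (μ T).toReal = 0 := by
      by_contra hm0
      have hmpos : 0 < (μ T).toReal := lt_of_le_of_ne ENNReal.toReal_nonneg (Ne.symm hm0)
      have h3 : c * (μ T).toReal ≤ ‖A‖^2 * (μ T).toReal := hlow.trans (hnorm ▸ hup)
      rw [hc] at h3
      nlinarith [mul_pos hcpos hmpos]
    have := (ENNReal.toReal_eq_zero_iff _).1 hm
    tauto
  have hae : ∀ᵐ x ∂μ, ∀ n : ℕ, x ∉ (D ∩ {y | ‖A‖^2 + 1/((n:ℝ)+1) ≤ (g y)^2}) := by
    rw [ae_all_iff]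
    intro n
    exact (measure_eq_zero_iff_ae_notMem).1 (key n)
  filter_upwards [hae] with x hx hxD
  have hsq : (g x)^2 ≤ ‖A‖^2 := by
    by_contra h
    push_neg at h
    obtain ⟨n, hn⟩ := exists_nat_one_div_lt (sub_pos.2 h)
    exact hx n ⟨hxD, by simp only [mem_setOf_eq]; linarith⟩
  calc |g x| = Real.sqrt ((g x)^2) := (Real.sqrt_sq_eq_abs _).symm
  _ ≤ Real.sqrt (‖A‖^2) := Real.sqrt_le_sqrt hsq
  _ = ‖A‖ := Real.sqrt_sq (norm_nonneg _)

end Aux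

/-- A bounded operator `A` on `L²(μ)` (μ σ-finite) such that `⟪φ, A ψ⟫ = 0` whenever
`φ` and `ψ` have disjoint supports (i.e. `φ * ψ = 0` a.e.) is a multiplication operator
by some `v ∈ L^∞` with `‖v‖_∞ ≤ ‖A‖`. -/
theorem stmt_0 {X : Type*} [MeasurableSpace X] (μ : Measure X) [SigmaFinite μ]
    (A : Lp ℝ 2 μ →L[ℝ] Lp ℝ 2 μ)
    (hdisj : ∀ φ ψ : Lp ℝ 2 μ, (fun x => (φ : X → ℝ) x * (ψ : X → ℝ) x) =ᵐ[μ] 0 →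
      @inner ℝ _ _ φ (A ψ) = 0) :
    ∃ v : Lp ℝ ⊤ μ, ‖v‖ ≤ ‖A‖ ∧
      ∀ φ : Lp ℝ 2 μ, (A φ : X → ℝ) =ᵐ[μ] fun x => (v : X → ℝ) x * (φ : X → ℝ) x := by
  classical
  set D : ℕ → Set X := disjointed (spanningSets μ) with hDdef
  have hDm : ∀ n, MeasurableSet (D n) := MeasurableSet.disjointed (measurableSet_spanningSets μ)
  have hDμ : ∀ n, μ (D n) ≠ ∞ := fun n =>
    ((measure_mono (disjointed_subset _ n)).trans_lt (measure_spanningSets_lt_top μ n)).ne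
  set χ : ℕ → Lp ℝ 2 μ := fun n => indicatorConstLp 2 (hDm n) (hDμ n) (1:ℝ) with hχdef
  obtain ⟨g, hgm, hgae⟩ : ∃ g : ℕ → X → ℝ, (∀ n, Measurable (g n)) ∧
      (∀ n, (A (χ n) : X → ℝ) =ᵐ[μ] g n) :=
    ⟨fun n => (Lp.aestronglyMeasurable (A (χ n))).mk _,
     fun n => (Lp.aestronglyMeasurable (A (χ n))).stronglyMeasurable_mk.measurable,
     fun n => (Lp.aestronglyMeasurable (A (χ n))).ae_eq_mk⟩
  set v : X → ℝ := fun x => g (spanningSetsIndex μ x) x with hvdef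
  have hvm : Measurable v := by
    have h1 : Measurable (fun p : X × ℕ => g p.2 p.1) :=
      measurable_from_prod_countable_left (fun n => hgm n)
    exact h1.comp (measurable_id.prodMk (measurableSet_spanningSetsIndex μ))
  have hvg : ∀ n x, x ∈ D n → v x = g n x := by
    intro n x hx
    have h2 : spanningSetsIndex μ x = n := (spanningSetsIndex_eq_iff μ).2 hx
    rw [hvdef]
    dsimp only
    rw [h2]
  have hbound : ∀ n, ∀ᵐ x ∂μ, x ∈ D n → |g n x| ≤ ‖A‖ := fun n =>
    ae_bound A hdisj (hDm n) (hDμ n) (hgm n) (hgae n)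
  have hvbound : ∀ᵐ x ∂μ, |v x| ≤ ‖A‖ := by
    filter_upwards [ae_all_iff.2 hbound] with x hx
    rw [hvg _ x (mem_disjointed_spanningSetsIndex μ x)]
    exact hx _ (mem_disjointed_spanningSetsIndex μ x)
  have hvsnorm : eLpNorm v ∞ μ ≤ ENNReal.ofReal ‖A‖ := by
    have h3 := eLpNorm_le_of_ae_bound (μ := μ) (p := ∞) (f := v) (C := ‖A‖) ?_
    · have h4 : μ Set.univ ^ ((∞ : ℝ≥0∞).toReal)⁻¹ * ENNReal.ofReal ‖A‖
          = ENNReal.ofReal ‖A‖ := by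
        rw [ENNReal.toReal_top, inv_zero, ENNReal.rpow_zero, one_mul]
      exact h4 ▸ h3
    · filter_upwards [hvbound] with x hx
      rwa [Real.norm_eq_abs]
  have hvmem : MemLp v ∞ μ :=
    ⟨hvm.aestronglyMeasurable, hvsnorm.trans_lt ENNReal.ofReal_lt_top⟩
  -- the multiplication operator
  have hmem : ∀ φf : Lp ℝ 2 μ, MemLp (v • ((φf : X → ℝ))) 2 μ := fun φf =>
    (Lp.memLp φf).smul hvmem
  have hMbound : ∀ φf : Lp ℝ 2 μ, ‖(hmem φf).toLp (v • ((φf : X → ℝ)))‖ ≤ ‖A‖ * ‖φf‖ := by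
    intro φf
    rw [Lp.norm_toLp]
    have h1 : eLpNorm (v • ((φf : X → ℝ))) 2 μ ≤ ENNReal.ofReal ‖A‖ * eLpNorm (φf : X → ℝ) 2 μ :=
      (eLpNorm_smul_le_eLpNorm_top_mul_eLpNorm 2 (Lp.aestronglyMeasurable φf) v).trans
        (mul_le_mul_left hvsnorm _)
    have h2 : ENNReal.ofReal ‖A‖ * eLpNorm ((φf : X → ℝ)) 2 μ = ENNReal.ofReal (‖A‖ * ‖φf‖) := by
      rw [ENNReal.ofReal_mul (norm_nonneg A), Lp.norm_def,
        ENNReal.ofReal_toReal (Lp.eLpNorm_ne_top φf)]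
    exact ENNReal.toReal_le_of_le_ofReal (mul_nonneg (norm_nonneg _) (norm_nonneg _)) (h1.trans_eq h2)
  set M : Lp ℝ 2 μ →L[ℝ] Lp ℝ 2 μ := LinearMap.mkContinuous
    { toFun := fun φf => (hmem φf).toLp (v • ((φf : X → ℝ)))
      map_add' := by
        intro φ ψ
        apply Lp.ext
        filter_upwards [MemLp.coeFn_toLp (hmem (φ + ψ)), MemLp.coeFn_toLp (hmem φ),
          MemLp.coeFn_toLp (hmem ψ), Lp.coeFn_add φ ψ,
          Lp.coeFn_add ((hmem φ).toLp _) ((hmem ψ).toLp _)] with x h1 h2 h3 h4 h5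
        rw [h1, h5, Pi.add_apply, h2, h3]
        simp only [Pi.mul_apply, Pi.smul_apply, smul_eq_mul, Pi.add_apply, h4]
        ring
      map_smul' := by
        intro c φ
        apply Lp.ext
        filter_upwards [MemLp.coeFn_toLp (hmem (c • φ)), MemLp.coeFn_toLp (hmem φ),
          Lp.coeFn_smul c φ, Lp.coeFn_smul c ((hmem φ).toLp _)] with x h1 h2 h3 h4
        simp only [RingHom.id_apply]
        rw [h1, h4]
        simp only [Pi.smul_apply]
        rw [h2]
        simp only [Pi.smul_apply', smul_eq_mul]
        rw [h3]
        simp only [Pi.smul_apply, smul_eq_mul]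
        ring } ‖A‖ hMbound with hMdef
  have hMcoe : ∀ φf : Lp ℝ 2 μ, (M φf : X → ℝ) =ᵐ[μ] v • ((φf : X → ℝ)) := by
    intro φf
    exact MemLp.coeFn_toLp (hmem φf)
  -- the key identity on indicators
  have hP1 : ∀ {s : Set X} (hs : MeasurableSet s) (hμs : μ s ≠ ∞),
      (A (indicatorConstLp 2 hs hμs (1:ℝ)) : X → ℝ)
        =ᵐ[μ] fun x => v x * s.indicator (fun _ => (1:ℝ)) x := by
    intro s hs hμs
    have hn : ∀ n : ℕ, ∀ᵐ x ∂μ,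
        (D n).indicator (A (indicatorConstLp 2 hs hμs (1:ℝ)) : X → ℝ) x
          = (s ∩ D n).indicator (g n) x := by
      intro n
      have hT : MeasurableSet (s ∩ D n) := hs.inter (hDm n)
      have hμT : μ (s ∩ D n) ≠ ∞ :=
        ((measure_mono inter_subset_right).trans_lt (lt_top_iff_ne_top.2 (hDμ n))).ne
      have hkey : mulInd (hDm n) (indicatorConstLp 2 hs hμs (1:ℝ))
          = indicatorConstLp 2 hT hμT (1:ℝ) := by
        apply Lp.ext
        filter_upwards [mulInd_coeFn (hDm n) (indicatorConstLp 2 hs hμs (1:ℝ)),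
          indicatorConstLp_coeFn (p := 2) (hs := hs) (hμs := hμs) (c := (1:ℝ)),
          indicatorConstLp_coeFn (p := 2) (hs := hT) (hμs := hμT) (c := (1:ℝ))] with x h1 h2 h3
        rw [h1, h3]
        by_cases hx1 : x ∈ D n
        · rw [Set.indicator_of_mem hx1, h2]
          by_cases hx2 : x ∈ s
          · rw [Set.indicator_of_mem hx2, Set.indicator_of_mem (Set.mem_inter hx2 hx1)]
          · rw [Set.indicator_of_notMem hx2, Set.indicator_of_notMem (fun h => hx2 h.1)]
        · rw [Set.indicator_of_notMem hx1, Set.indicator_of_notMem (fun h => hx1 h.2)]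
      have hc := commute_ind A hdisj (hDm n) (indicatorConstLp 2 hs hμs (1:ℝ))
      rw [hkey] at hc
      have ha := apply_ind_subset A hdisj hT (hDm n) inter_subset_right hμT (hDμ n)
      filter_upwards [hc, ha, hgae n] with x h1 h2 h3
      rw [← h1, h2]
      by_cases hx : x ∈ s ∩ D n
      · rw [Set.indicator_of_mem hx, Set.indicator_of_mem hx, h3]
      · rw [Set.indicator_of_notMem hx, Set.indicator_of_notMem hx]
    filter_upwards [ae_all_iff.2 hn] with x hx
    have hxn := mem_disjointed_spanningSetsIndex μ x
    set n := spanningSetsIndex μ x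
    have h1 := hx n
    rw [Set.indicator_of_mem hxn] at h1
    rw [h1, hvg n x hxn]
    by_cases hx2 : x ∈ s
    · rw [Set.indicator_of_mem (Set.mem_inter hx2 hxn), Set.indicator_of_mem hx2, mul_one]
    · rw [Set.indicator_of_notMem (fun h => hx2 h.1), Set.indicator_of_notMem hx2, mul_zero]
  -- extend to general constants
  have hPc : ∀ (c : ℝ) {s : Set X} (hs : MeasurableSet s) (hμs : μ s < ∞),
      (A (indicatorConstLp 2 hs hμs.ne (c:ℝ)) : X → ℝ)
        =ᵐ[μ] fun x => v x * (indicatorConstLp 2 hs hμs.ne (c:ℝ) : X → ℝ) x := by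
    intro c s hs hμs
    have hsc : indicatorConstLp 2 hs hμs.ne (c:ℝ) = c • indicatorConstLp 2 hs hμs.ne (1:ℝ) := by
      apply Lp.ext
      filter_upwards [indicatorConstLp_coeFn (p := 2) (hs := hs) (hμs := hμs.ne) (c := c),
        indicatorConstLp_coeFn (p := 2) (hs := hs) (hμs := hμs.ne) (c := (1:ℝ)),
        Lp.coeFn_smul c (indicatorConstLp 2 hs hμs.ne (1:ℝ))] with x h1 h2 h3
      rw [h1, h3]
      simp only [Pi.smul_apply, h2, smul_eq_mul]
      by_cases hx : x ∈ s
      · rw [Set.indicator_of_mem hx, Set.indicator_of_mem hx, mul_one]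
      · rw [Set.indicator_of_notMem hx, Set.indicator_of_notMem hx, mul_zero]
    have hA : (A (indicatorConstLp 2 hs hμs.ne (c:ℝ)) : X → ℝ)
        =ᵐ[μ] fun x => c * (A (indicatorConstLp 2 hs hμs.ne (1:ℝ)) : X → ℝ) x := by
      rw [hsc, A.map_smul]
      filter_upwards [Lp.coeFn_smul c (A (indicatorConstLp 2 hs hμs.ne (1:ℝ)))] with x h1
      rw [h1]
      simp [smul_eq_mul]
    filter_upwards [hA, hP1 hs hμs.ne,
      indicatorConstLp_coeFn (p := 2) (hs := hs) (hμs := hμs.ne) (c := c)] with x h1 h2 h3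
    rw [h1, h2, h3]
    by_cases hx : x ∈ s
    · rw [Set.indicator_of_mem hx, Set.indicator_of_mem hx]
      ring
    · rw [Set.indicator_of_notMem hx, Set.indicator_of_notMem hx]
      ring
  -- conclude by Lp.induction
  have hall : ∀ f : Lp ℝ 2 μ, (A f : X → ℝ) =ᵐ[μ] fun x => v x * (f : X → ℝ) x := by
    refine Lp.induction (E := ℝ) (μ := μ) (p := 2) ENNReal.ofNat_ne_top
      (fun f => (A f : X → ℝ) =ᵐ[μ] fun x => v x * (f : X → ℝ) x) ?_ ?_ ?_
    · intro c s hs hμs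
      have := hPc c hs hμs
      simpa [Lp.simpleFunc.coe_indicatorConst] using this
    · intro f g' hf hg' hsupp hPf hPg'
      have hA : (A (hf.toLp f + hg'.toLp g') : X → ℝ)
          =ᵐ[μ] (A (hf.toLp f) : X → ℝ) + (A (hg'.toLp g') : X → ℝ) := by
        rw [map_add]
        exact Lp.coeFn_add _ _
      filter_upwards [hPf, hPg', Lp.coeFn_add (hf.toLp f) (hg'.toLp g'), hA] with x h1 h2 h3 h4
      rw [h4, Pi.add_apply, h1, h2, h3, Pi.add_apply]
      ring
    · have hset : {f : Lp ℝ 2 μ | (A f : X → ℝ) =ᵐ[μ] fun x => v x * (f : X → ℝ) x}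
          = {f : Lp ℝ 2 μ | A f = M f} := by
        ext f
        constructor
        · intro h
          have h' : (A f : X → ℝ) =ᵐ[μ] fun x => v x * (f : X → ℝ) x := h
          apply Lp.ext
          refine h'.trans ?_
          filter_upwards [hMcoe f] with x hx
          rw [hx]
          rfl
        · intro h
          have h2 := hMcoe f
          rw [← h] at h2
          show (A f : X → ℝ) =ᵐ[μ] fun x => v x * (f : X → ℝ) x
          refine h2.trans ?_
          exact Filter.Eventually.of_forall fun x => rfl
      rw [hset]
      exact isClosed_eq A.continuous M.continuous
  refine ⟨hvmem.toLp v, ?_, ?_⟩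
  · rw [Lp.norm_toLp]
    exact ENNReal.toReal_le_of_le_ofReal (norm_nonneg A) hvsnorm
  · intro φ
    filter_upwards [hall φ, MemLp.coeFn_toLp hvmem] with x h1 h2
    rw [h1, h2]
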